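/- arXiv:1509.08336 — 4 statements merged into one kernel-verified Lean document; each statement's English description precedes it below -/
import Mathlib

section
/- Let (x,y) ∈ ℝ² with (x,y) ≠ (0,0). Then there exist a > 0, λ ∈ {0,1,2}, and a matrix g ∈ O(1,1) (i.e., a 2×2 real matrix with gᵀ·diag(1,-1)·g = diag(1,-1)) such that the row vector (x,y)·g = (a, λa). -/
/-!
Write `Q(x, y) = x² - y²`. If `Q(x, y) = Q(u, v) ≠ 0`, the boost `!![c, s; s, c]` with
`c = (xu - yv)/Q`, `s = (xv - yu)/Q` carries `(x, y)` to `(u, v)`,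
and `c² - s² = Q(u, v)/Q(x, y) = 1`.
So `(x, y)` is moved to `(√Q, 0)` when `Q > 0` and to `(a, 2a)` with `a = √(-Q/3)` when `Q < 0`.
When `Q = 0` we have `|x| = |y|`, and a diagonal sign matrix moves `(x, y)` to `(|x|, |x|)`.
-/

open Matrix

lemma boost_preserves_minkowski {c s : ℝ} (h : c ^ 2 - s ^ 2 = 1) :
    (!![c, s; s, c])ᵀ * diagonal ![1, -1] * !![c, s; s, c] = diagonal ![1, -1] := by
  ext i j
  fin_cases i <;> fin_cases j <;> simp [Matrix.mul_apply, Fin.sum_univ_two]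
  · linear_combination h
  · ring
  · ring
  · linear_combination -h

lemma diagonal_preserves_minkowski {p r : ℝ} (hp : p ^ 2 = 1) (hr : r ^ 2 = 1) :
    (diagonal ![p, r])ᵀ * diagonal ![1, -1] * diagonal ![p, r] = diagonal ![1, -1] := by
  rw [diagonal_transpose, diagonal_mul_diagonal, diagonal_mul_diagonal]
  congr 1
  ext i
  fin_cases i <;> simp [← sq, hp, hr]

lemma vecMul_boost (x y c s : ℝ) :
    vecMul ![x, y] !![c, s; s, c] = ![x * c + y * s, x * s + y * c] := by
  ext i
  fin_cases i <;> simp [vecMul, dotProduct, Fin.sum_univ_two]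

lemma exists_boost_vecMul_eq {x y u v : ℝ} (hQ : x ^ 2 - y ^ 2 = u ^ 2 - v ^ 2)
    (hQ0 : x ^ 2 - y ^ 2 ≠ 0) :
    ∃ g : Matrix (Fin 2) (Fin 2) ℝ,
      gᵀ * diagonal ![1, -1] * g = diagonal ![1, -1] ∧ vecMul ![x, y] g = ![u, v] := by
  generalize hQdef : x ^ 2 - y ^ 2 = Q at hQ0
  refine ⟨!![(x * u - y * v) / Q, (x * v - y * u) / Q; (x * v - y * u) / Q, (x * u - y * v) / Q],
    boost_preserves_minkowski ?_, ?_⟩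
  · field_simp
    linear_combination (x ^ 2 - y ^ 2 + Q) * hQdef - (x ^ 2 - y ^ 2) * hQ
  · rw [vecMul_boost]
    congr 2 <;> field_simp
    · linear_combination u * hQdef
    · linear_combination v * hQdef

lemma exists_diagonal_vecMul_eq_abs {x y : ℝ} (hx : x ≠ 0) (hy : y ≠ 0) :
    ∃ g : Matrix (Fin 2) (Fin 2) ℝ,
      gᵀ * diagonal ![1, -1] * g = diagonal ![1, -1] ∧ vecMul ![x, y] g = ![|x|, |y|] := by
  refine ⟨diagonal ![|x| / x, |y| / y], diagonal_preserves_minkowski ?_ ?_, ?_⟩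
  · rw [div_pow, sq_abs, div_self (pow_ne_zero 2 hx)]
  · rw [div_pow, sq_abs, div_self (pow_ne_zero 2 hy)]
  · ext i
    fin_cases i <;> simp [vecMul_diagonal, mul_div_cancel₀, hx, hy]

theorem stmt_0 (x y : ℝ) (h : (x, y) ≠ ((0 : ℝ), (0 : ℝ))) :
    ∃ (a lam : ℝ) (g : Matrix (Fin 2) (Fin 2) ℝ),
      0 < a ∧ lam ∈ ({0, 1, 2} : Set ℝ) ∧
      gᵀ * Matrix.diagonal ![1, -1] * g = Matrix.diagonal ![1, -1] ∧
      Matrix.vecMul ![x, y] g = ![a, lam * a] := by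
  rcases lt_trichotomy (x ^ 2 - y ^ 2) 0 with hneg | hnull | hpos
  · obtain ⟨a, ha, ha2⟩ : ∃ a : ℝ, 0 < a ∧ a ^ 2 = (y ^ 2 - x ^ 2) / 3 :=
      ⟨_, Real.sqrt_pos.2 (by linarith), Real.sq_sqrt (by linarith)⟩
    obtain ⟨g, hg, hxy⟩ := exists_boost_vecMul_eq (u := a) (v := 2 * a)
      (by linear_combination 3 * ha2) hneg.ne
    exact ⟨a, 2, g, ha, by simp, hg, hxy⟩
  · have hx : x ≠ 0 := by rintro rfl; simp_all
    have hy : y ≠ 0 := by rintro rfl; simp_all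
    have habs : |y| = |x| := (sq_eq_sq_iff_abs_eq_abs _ _).1 (by linarith)
    obtain ⟨g, hg, hxy⟩ := exists_diagonal_vecMul_eq_abs hx hy
    exact ⟨|x|, 1, g, abs_pos.2 hx, by simp, hg, by rw [hxy, habs, one_mul]⟩
  · obtain ⟨a, ha, ha2⟩ : ∃ a : ℝ, 0 < a ∧ a ^ 2 = x ^ 2 - y ^ 2 :=
      ⟨_, Real.sqrt_pos.2 hpos, Real.sq_sqrt hpos.le⟩
    obtain ⟨g, hg, hxy⟩ := exists_boost_vecMul_eq (u := a) (v := 0 * a)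
      (by linear_combination -ha2) hpos.ne'
    exact ⟨a, 0, g, ha, by simp, hg, hxy⟩
end

section
/- If x² - y² < 0, then setting a = √((y² - x²)/3) and g = (1/(3a))·[[2y - x, y - 2x], [y - 2x, 2y - x]], the matrix g lies in O(1,1) and (x,y)·g = (a, 2a). -/
open Matrix

theorem stmt_2 (x y : ℝ) (h : x ^ 2 - y ^ 2 < 0) :
    let a : ℝ := Real.sqrt ((y ^ 2 - x ^ 2) / 3)
    let g : Matrix (Fin 2) (Fin 2) ℝ :=
      (1 / (3 * a)) • !![2 * y - x, y - 2 * x; y - 2 * x, 2 * y - x]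
    gᵀ * Matrix.diagonal ![1, -1] * g = Matrix.diagonal ![1, -1] ∧
      Matrix.vecMul ![x, y] g = ![a, 2 * a] := by
  intro a g
  have hpos : (0:ℝ) < (y ^ 2 - x ^ 2) / 3 := by linarith
  have ha : 0 < a := Real.sqrt_pos.mpr hpos
  have ha2 : a ^ 2 = (y ^ 2 - x ^ 2) / 3 := Real.sq_sqrt hpos.le
  have hane : a ≠ 0 := ne_of_gt ha
  constructor
  · ext i j
    fin_cases i <;> fin_cases j <;>
      simp [g, Matrix.mul_apply, Fin.sum_univ_succ, Matrix.diagonal] <;>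
      field_simp <;> nlinarith [ha2]
  · funext i
    fin_cases i <;>
      simp [g, Matrix.vecMul, dotProduct, Fin.sum_univ_succ] <;>
      field_simp <;> nlinarith [ha2]
end

section
/- Let p,q ≥ 1 and n = p+q. Let Q₁ be the subgroup of GL_n(ℝ) consisting of invertible matrices whose first row is (g₁₁, 0, …, 0). Then for every g ∈ GL_n(ℝ) there exist λ ∈ {0,1,2}, h ∈ Q₁, and k ∈ O(p,q) such that h·g·k = I_n + λ·E_{1,n}, where E_{1,n} is the matrix with 1 in position (1,n) and 0 elsewhere. -/
open Matrix

/-- The matrix `I_{p,q} = diag(1,…,1,-1,…,-1)` with `p` ones and `q` minus ones. -/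
noncomputable def Ipq (p q : ℕ) : Matrix (Fin (p + q)) (Fin (p + q)) ℝ :=
  Matrix.diagonal fun i => if (i : ℕ) < p then (1 : ℝ) else -1

/-- Membership in `O(p,q)`. -/
def inOpq (p q : ℕ) (k : Matrix (Fin (p + q)) (Fin (p + q)) ℝ) : Prop :=
  kᵀ * Ipq p q * k = Ipq p q

/-!
`O(p,q)` acts on row vectors from the right, and the first row `w` of `g` has a normal form
under this action: `O(p) × O(q)` moves `w` to `a e₁ + b eₙ` with `a, b ≥ 0`, and a hyperbolic
rotation in the `(e₁, eₙ)`-plane moves that to `c (e₁ + λ eₙ)`, where `λ = 0, 1, 2` according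
as `a² - b²` is positive, zero or negative. Then `M = g k` has first row `c` times that of
`T = 1 + λ E₁ₙ`, so `h = T M⁻¹` has first row `c⁻¹ e₁`, and `h g k = T`.
-/

open LieAlgebra.Orthogonal

lemma exists_mem_orthogonalGroup_vecMul_eq_single {ι : Type*} [Fintype ι] [DecidableEq ι]
    (v : ι → ℝ) (j : ι) : ∃ U ∈ orthogonalGroup ι ℝ, v ᵥ* U = Pi.single j ‖WithLp.toLp 2 v‖ := by
  set x : EuclideanSpace ℝ ι := WithLp.toLp 2 v
  rcases eq_or_ne x 0 with hx | hx
  · refine ⟨1, one_mem _, ?_⟩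
    obtain rfl : v = 0 := by simpa [x] using hx
    simp [hx]
  have hunit : Orthonormal ℝ (({j} : Set ι).domRestrict fun _ => ‖x‖⁻¹ • x) := by
    refine ⟨fun _ => ?_, fun i i' hii' => absurd (Subtype.ext (i.2.trans i'.2.symm)) hii'⟩
    simp [norm_smul, hx]
  obtain ⟨b, hb⟩ := hunit.exists_orthonormalBasis_extension_of_card_eq (by simp)
  refine ⟨(EuclideanSpace.basisFun ι ℝ).toBasis.toMatrix b,
    (EuclideanSpace.basisFun ι ℝ).toMatrix_orthonormalBasis_mem_orthogonal b, ?_⟩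
  have hrepr : b.repr x = ‖x‖ • EuclideanSpace.single j 1 := by
    conv_lhs =>
      rw [show x = ‖x‖ • b j by
        rw [hb j rfl, smul_smul, mul_inv_cancel₀ (norm_ne_zero_iff.2 hx), one_smul]]
    rw [map_smul, b.repr_self]
  ext i
  simpa [x, vecMul, dotProduct, Module.Basis.toMatrix_apply, b.repr_apply_apply,
    PiLp.inner_apply, mul_comm, Pi.single_apply] using congrArg (·.ofLp i) hrepr

lemma exists_hyperbolic_normal_form {a b : ℝ} (ha : 0 ≤ a) (hb : 0 ≤ b) :
    ∃ α β : ℝ, α ^ 2 - β ^ 2 = 1 ∧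
      ∃ lam ∈ ({0, 1, 2} : Set ℝ), a * β + b * α = lam * (a * α + b * β) := by
  rcases lt_trichotomy a b with hab | rfl | hab
  · -- `(1, 2)` has square norm `1 - 4 = -3`, whence the factor `3`
    obtain ⟨s, hs, hs2⟩ : ∃ s : ℝ, 0 < s ∧ s ^ 2 = 3 * (b ^ 2 - a ^ 2) :=
      ⟨√(3 * (b ^ 2 - a ^ 2)), Real.sqrt_pos.2 (by nlinarith), Real.sq_sqrt (by nlinarith)⟩
    refine ⟨(2 * b - a) / s, (b - 2 * a) / s, ?_, 2, by simp, ?_⟩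
    · field_simp
      linear_combination -hs2
    · field_simp
      ring
  · exact ⟨1, 0, by norm_num, 1, by simp, by ring⟩
  · obtain ⟨s, hs, hs2⟩ : ∃ s : ℝ, 0 < s ∧ s ^ 2 = a ^ 2 - b ^ 2 :=
      ⟨√(a ^ 2 - b ^ 2), Real.sqrt_pos.2 (by nlinarith), Real.sq_sqrt (by nlinarith)⟩
    refine ⟨a / s, -b / s, ?_, 0, by simp, ?_⟩
    · field_simp
      linear_combination -hs2
    · field_simp
      ring

lemma mul_mul_self_eq_of_hyperbolic_pair {R A : Type*} [CommRing R] [Ring A] [Algebra R A]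
    {η P N : A} (hPP : P * P = P) (hNN : N * N = P) (hPN : P * N = N) (hNP : N * P = N)
    (hPη : P * η = η * P) (hNη : N * η = -(η * N)) {α β : R} (h : α ^ 2 - β ^ 2 = 1) :
    (1 + (α - 1) • P + β • N) * η * (1 + (α - 1) • P + β • N) = η := by
  have hcomm : (1 + (α - 1) • P + β • N) * η = η * (1 + (α - 1) • P - β • N) := by
    simp only [add_mul, mul_add, one_mul, mul_one, smul_mul_assoc, mul_smul_comm, hPη,
      hNη, smul_neg, sub_eq_add_neg, mul_neg]
  calc (1 + (α - 1) • P + β • N) * η * (1 + (α - 1) • P + β • N)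
      = η * (1 + (α ^ 2 - β ^ 2 - 1) • P) := by
        rw [hcomm, mul_assoc]
        congr 1
        simp only [add_mul, mul_add, sub_mul, one_mul, mul_one, smul_mul_assoc,
          mul_smul_comm, hPP, hNN, hPN, hNP]
        module
    _ = η := by rw [h, sub_self, zero_smul, add_zero, mul_one]

section HyperbolicRotation

variable {ι R : Type*} [DecidableEq ι] [CommRing R]

-- Acts as `!![α, β; β, α]` on the coordinates `u, v` and as the identity on the others.
def hyperbolicRotation (u v : ι) (α β : R) : Matrix ι ι R :=
  1 + (α - 1) • (single u u 1 + single v v 1) + β • (single u v 1 + single v u 1)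

lemma transpose_hyperbolicRotation (u v : ι) (α β : R) :
    (hyperbolicRotation u v α β)ᵀ = hyperbolicRotation u v α β := by
  simp only [hyperbolicRotation, transpose_add, transpose_smul, transpose_one, transpose_single]
  rw [add_comm (single v u _)]

variable [Fintype ι]

lemma diagonal_mul_single_eq (d : ι → R) (i j : ι) (c : R) :
    diagonal d * single i j c = single i j (d i * c) := by
  ext a b
  by_cases h : i = a <;> simp [diagonal_mul, single_apply, h]

lemma single_mul_diagonal_eq (d : ι → R) (i j : ι) (c : R) :
    single i j c * diagonal d = single i j (c * d j) := by
  ext a b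
  by_cases h : j = b <;> simp [mul_diagonal, single_apply, h]

lemma transpose_hyperbolicRotation_mul_diagonal_mul {u v : ι} (huv : u ≠ v) {d : ι → R}
    (hu : d u = 1) (hv : d v = -1) {α β : R} (h : α ^ 2 - β ^ 2 = 1) :
    (hyperbolicRotation u v α β)ᵀ * diagonal d * hyperbolicRotation u v α β = diagonal d := by
  rw [transpose_hyperbolicRotation]
  apply mul_mul_self_eq_of_hyperbolic_pair _ _ _ _ _ _ h <;>
    simp [add_mul, mul_add, single_mul_single_same, single_mul_single_of_ne, huv, huv.symm,
      diagonal_mul_single_eq, single_mul_diagonal_eq, hu, hv, single_neg] <;> abel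

lemma vecMul_hyperbolicRotation {u v : ι} (huv : u ≠ v) (α β a b : R) :
    (Pi.single u a + Pi.single v b) ᵥ* hyperbolicRotation u v α β =
      Pi.single u (a * α + b * β) + Pi.single v (a * β + b * α) := by
  ext i
  rcases eq_or_ne i u with rfl | hu
  · simp [hyperbolicRotation, add_vecMul, vecMul_add, huv, huv.symm]
    ring
  rcases eq_or_ne i v with rfl | hv
  · simp [hyperbolicRotation, add_vecMul, vecMul_add, huv, huv.symm]
    ring
  simp [hyperbolicRotation, add_vecMul, vecMul_add, hu, hv, hu.symm, hv.symm]

end HyperbolicRotation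

section IndefiniteOrthogonal

variable {ι₁ ι₂ : Type*} [Fintype ι₁] [Fintype ι₂] [DecidableEq ι₁] [DecidableEq ι₂]

local notation "η" => indefiniteDiagonal ι₁ ι₂ ℝ

lemma transpose_fromBlocks_mul_indefiniteDiagonal_mul {U : Matrix ι₁ ι₁ ℝ}
    {V : Matrix ι₂ ι₂ ℝ} (hU : U ∈ orthogonalGroup ι₁ ℝ) (hV : V ∈ orthogonalGroup ι₂ ℝ) :
    (fromBlocks U 0 0 V)ᵀ * η * fromBlocks U 0 0 V = η := by
  rw [mem_orthogonalGroup_iff'] at hU hV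
  have hη : η = fromBlocks 1 0 0 (-1) := by
    rw [indefiniteDiagonal, ← fromBlocks_diagonal, diagonal_one, ← diagonal_one, ← diagonal_neg]
    rfl
  rw [hη, fromBlocks_transpose, fromBlocks_multiply, fromBlocks_multiply]
  simp [hU, hV]

theorem exists_indefiniteOrthogonal_vecMul_eq (x : ι₁ ⊕ ι₂ → ℝ) (i₁ : ι₁) (i₂ : ι₂) :
    ∃ k : Matrix (ι₁ ⊕ ι₂) (ι₁ ⊕ ι₂) ℝ, kᵀ * η * k = η ∧ ∃ lam ∈ ({0, 1, 2} : Set ℝ),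
      ∃ c : ℝ, x ᵥ* k = Pi.single (Sum.inl i₁) c + Pi.single (Sum.inr i₂) (lam * c) := by
  obtain ⟨U, hU, hxU⟩ := exists_mem_orthogonalGroup_vecMul_eq_single (x ∘ Sum.inl) i₁
  obtain ⟨V, hV, hxV⟩ := exists_mem_orthogonalGroup_vecMul_eq_single (x ∘ Sum.inr) i₂
  obtain ⟨α, β, hαβ, lam, hlam, hrel⟩ :=
    exists_hyperbolic_normal_form (norm_nonneg (WithLp.toLp 2 (x ∘ Sum.inl)))
      (norm_nonneg (WithLp.toLp 2 (x ∘ Sum.inr)))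
  set a := ‖WithLp.toLp 2 (x ∘ Sum.inl)‖
  set b := ‖WithLp.toLp 2 (x ∘ Sum.inr)‖
  set B := fromBlocks U 0 0 V
  set R := hyperbolicRotation (Sum.inl i₁ : ι₁ ⊕ ι₂) (Sum.inr i₂) α β
  refine ⟨B * R, ?_, lam, hlam, a * α + b * β, ?_⟩
  · calc (B * R)ᵀ * η * (B * R) = Rᵀ * (Bᵀ * η * B) * R := by
          simp only [transpose_mul, mul_assoc]
      _ = η := by
          rw [transpose_fromBlocks_mul_indefiniteDiagonal_mul hU hV]
          exact transpose_hyperbolicRotation_mul_diagonal_mul Sum.inl_ne_inr rfl rfl hαβ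
  · have hxB : x ᵥ* B = Pi.single (Sum.inl i₁) a + Pi.single (Sum.inr i₂) b := by
      rw [vecMul_fromBlocks]
      ext (j | j) <;> simp [hxU, hxV, Pi.single_apply, a, b]
    rw [← vecMul_vecMul, hxB, vecMul_hyperbolicRotation Sum.inl_ne_inr, hrel]

end IndefiniteOrthogonal

lemma Ipq_eq_submatrix (p q : ℕ) : Ipq p q =
    (indefiniteDiagonal (Fin p) (Fin q) ℝ).submatrix finSumFinEquiv.symm finSumFinEquiv.symm := by
  rw [indefiniteDiagonal, submatrix_diagonal_equiv, Ipq]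
  congr 1
  ext i
  obtain ⟨j | j, rfl⟩ := finSumFinEquiv.surjective i <;> simp

lemma inOpq_submatrix {p q : ℕ} {k : Matrix (Fin p ⊕ Fin q) (Fin p ⊕ Fin q) ℝ}
    (hk : kᵀ * indefiniteDiagonal (Fin p) (Fin q) ℝ * k = indefiniteDiagonal (Fin p) (Fin q) ℝ) :
    inOpq p q (k.submatrix finSumFinEquiv.symm finSumFinEquiv.symm) := by
  rw [inOpq, Ipq_eq_submatrix, transpose_submatrix, submatrix_mul_equiv, submatrix_mul_equiv, hk]

lemma isUnit_det_of_inOpq {p q : ℕ} {k : Matrix (Fin (p + q)) (Fin (p + q)) ℝ}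
    (hk : inOpq p q k) : IsUnit k.det := by
  have hI : IsUnit (Ipq p q).det := by
    rw [Ipq, det_diagonal, isUnit_iff_ne_zero, Finset.prod_ne_zero_iff]
    intro i _
    split_ifs <;> norm_num
  rw [← hk, det_mul] at hI
  exact isUnit_of_mul_isUnit_right hI

theorem exists_inOpq_vecMul_eq {p q : ℕ} (w : Fin (p + q) → ℝ) (i₁ : Fin p) (i₂ : Fin q) :
    ∃ k, inOpq p q k ∧ ∃ lam ∈ ({0, 1, 2} : Set ℝ), ∃ c : ℝ,
      w ᵥ* k = Pi.single (finSumFinEquiv (Sum.inl i₁)) c +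
        Pi.single (finSumFinEquiv (Sum.inr i₂)) (lam * c) := by
  obtain ⟨k, hk, lam, hlam, c, hwk⟩ :=
    exists_indefiniteOrthogonal_vecMul_eq (w ∘ finSumFinEquiv) i₁ i₂
  refine ⟨_, inOpq_submatrix hk, lam, hlam, c, ?_⟩
  rw [submatrix_vecMul_equiv, Equiv.symm_symm, hwk]
  ext i
  obtain ⟨j, rfl⟩ := finSumFinEquiv.surjective i
  simp only [Function.comp_apply, Equiv.symm_apply_apply, Pi.add_apply, Pi.single_apply,
    Equiv.apply_eq_iff_eq]

lemma mul_nonsing_inv_apply_eq_zero {ι K : Type*} [Fintype ι] [DecidableEq ι] [Field K]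
    {M T : Matrix ι ι K} (hM : IsUnit M.det) {i : ι} {c : K} (hrow : M i = c • T i)
    {j : ι} (hj : j ≠ i) : (T * M⁻¹) i j = 0 := by
  have hc : c ≠ 0 := by
    rintro rfl
    have := congrFun (congrFun (mul_nonsing_inv M hM) i) i
    simp [mul_apply_eq_vecMul, hrow] at this
  have hrowinv : (T * M⁻¹) i = c⁻¹ • (M * M⁻¹) i := by
    rw [mul_apply_eq_vecMul, mul_apply_eq_vecMul, hrow, smul_vecMul, inv_smul_smul₀ hc]
  rw [hrowinv, mul_nonsing_inv M hM]
  simp [one_apply_ne hj.symm]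

theorem stmt_6 (p q : ℕ) (hp : 1 ≤ p) (hq : 1 ≤ q) (g : GL (Fin (p + q)) ℝ) :
    ∃ lam : ℝ, lam ∈ ({0, 1, 2} : Set ℝ) ∧
      ∃ h : Matrix (Fin (p + q)) (Fin (p + q)) ℝ, IsUnit h ∧
        (∀ j : Fin (p + q), j ≠ ⟨0, by omega⟩ → h ⟨0, by omega⟩ j = 0) ∧
        ∃ k : Matrix (Fin (p + q)) (Fin (p + q)) ℝ, inOpq p q k ∧
          h * (g : Matrix (Fin (p + q)) (Fin (p + q)) ℝ) * k =
            1 + lam • Matrix.single ⟨0, by omega⟩ ⟨p + q - 1, by omega⟩ (1 : ℝ) := by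
  set i₀ : Fin (p + q) := ⟨0, by omega⟩
  set i₁ : Fin (p + q) := ⟨p + q - 1, by omega⟩
  have hi₀ : finSumFinEquiv (Sum.inl (⟨0, hp⟩ : Fin p)) = i₀ := rfl
  have hi₁ : finSumFinEquiv (Sum.inr (⟨q - 1, by omega⟩ : Fin q)) = i₁ := by
    ext; simp only [finSumFinEquiv_apply_right, Fin.natAdd_mk, i₁]; omega
  have hne : i₀ ≠ i₁ := by simp only [ne_eq, Fin.ext_iff, i₀, i₁]; omega
  obtain ⟨k, hk, lam, hlam, c, hrow⟩ :=
    exists_inOpq_vecMul_eq ((g : Matrix (Fin (p + q)) (Fin (p + q)) ℝ) i₀) ⟨0, hp⟩ ⟨q - 1, by omega⟩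
  rw [hi₀, hi₁] at hrow
  set T : Matrix (Fin (p + q)) (Fin (p + q)) ℝ := 1 + lam • single i₀ i₁ 1
  set M := (g : Matrix (Fin (p + q)) (Fin (p + q)) ℝ) * k
  have hM : IsUnit M.det := by
    rw [det_mul]
    exact ((Matrix.isUnit_iff_isUnit_det _).1 g.isUnit).mul (isUnit_det_of_inOpq hk)
  have hT : IsUnit T := IsNilpotent.isUnit_one_add ⟨2, by
    rw [sq, smul_mul_smul, single_mul_single_of_ne _ _ _ _ hne.symm, smul_zero]⟩
  have hMT : M i₀ = c • T i₀ := by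
    rw [show M i₀ = _ ᵥ* k from mul_apply_eq_vecMul _ _ _, hrow]
    ext j
    simp [T, one_apply, single_apply, Pi.single_apply, eq_comm, mul_add, mul_ite, mul_comm]
  refine ⟨lam, hlam, T * M⁻¹, hT.mul (isUnit_nonsing_inv_iff.2 ((isUnit_iff_isUnit_det _).2 hM)),
    fun j hj => mul_nonsing_inv_apply_eq_zero hM hMT hj, k, hk, ?_⟩
  calc T * M⁻¹ * g * k = T * (M⁻¹ * M) := by simp only [M, mul_assoc]
    _ = T := by rw [nonsing_inv_mul _ hM, mul_one]
end

section
/- Let n ≥ 2, λ ∈ ℝ, and let g be the Lie algebra with pseudo-orthonormal basis x₁,…,xₙ (with ⟨xᵢ,xᵢ⟩ = εᵢ ∈ {±1}, ⟨xᵢ,xⱼ⟩ = 0 for i ≠ j) satisfying [x₁,xᵢ] = xᵢ (2 ≤ i ≤ n−1), [x₁,xₙ] = −λx₁ + xₙ, [xᵢ,xₙ] = −λxᵢ (2 ≤ i ≤ n−1), other brackets zero. Then the Levi-Civita connection ∇ (defined by the Koszul formula on the metric Lie algebra) satisfies ∇_{x₁}x₁ = λε₁εₙxₙ, ∇_{x₁}xᵢ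 = 0, ∇_{x₁}xₙ = −λx₁, ∇_{xᵢ}x₁ = −xᵢ, ∇_{xᵢ}xⱼ = δᵢⱼεᵢ(ε₁x₁ + λεₙxₙ), ∇_{xᵢ}xₙ = −λxᵢ, ∇_{xₙ}x₁ = −xₙ, ∇_{xₙ}xᵢ = 0, ∇_{xₙ}xₙ = ε₁εₙx₁, for 2 ≤ i,j ≤ n−1. -/
/-!
With `α := ⟨A, ·⟩` for `A = ε₁x₁ + λεₙxₙ`, the bracket of this Lie algebra is
`[X, Y] = α(X) Y - α(Y) X`, as one checks on the basis. For any bracket of this shape the Koszul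
formula gives `∇_X Y = ⟨X, Y⟩ A - α(Y) X`, and the table is this formula evaluated on the basis.
-/

theorem nondegenerate_of_basis_diagonal {ι R M : Type*} [DecidableEq ι] [CommRing R] [IsDomain R]
    [AddCommGroup M] [Module R M] {B : LinearMap.BilinForm R M} (x : Module.Basis ι R M)
    (ε : ι → R) (hε : ∀ i, ε i ≠ 0) (hortho : ∀ i j, B (x i) (x j) = if i = j then ε i else 0) :
    B.Nondegenerate := by
  refine (LinearMap.BilinForm.iIsOrtho.nondegenerate_iff_not_isOrtho_basis_self B x
    (LinearMap.BilinForm.iIsOrtho_def.2 fun i j hij => by rw [hortho, if_neg hij])).2 fun i => ?_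
  rw [hortho, if_pos rfl]
  exact hε i

theorem lie_eq_smul_sub_smul_of_basis {ι R L : Type*} [CommRing R] [LieRing L] [LieAlgebra R L]
    (x : Module.Basis ι R L) (f : Module.Dual R L)
    (h : ∀ p q, ⁅x p, x q⁆ = f (x p) • x q - f (x q) • x p) (X Y : L) :
    ⁅X, Y⁆ = f X • Y - f Y • X := by
  let rhs : L →ₗ[R] L →ₗ[R] L :=
    LinearMap.mk₂ R (fun X Y => f X • Y - f Y • X) (fun _ _ _ => by simp only [map_add]; module)
      (fun _ _ _ => by simp only [map_smul, smul_eq_mul]; module)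
      (fun _ _ _ => by simp only [map_add]; module)
      (fun _ _ _ => by simp only [map_smul, smul_eq_mul]; module)
  have hext := LinearMap.ext_basis x x (B := (LieModule.toEnd R L L : L →ₗ[R] L →ₗ[R] L))
    (B' := rhs) (by simpa [rhs] using h)
  simpa [rhs] using LinearMap.congr_fun₂ hext X Y

theorem eq_of_koszul_of_lie_eq_smul_sub_smul {R L : Type*} [Field R] [CharZero R] [LieRing L]
    [LieAlgebra R L] {B : LinearMap.BilinForm R L} (hBsymm : ∀ X Y : L, B X Y = B Y X)
    (hB : B.Nondegenerate) (A : L) (hlie : ∀ X Y : L, ⁅X, Y⁆ = B A X • Y - B A Y • X)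
    {D : L → L → L}
    (hKoszul : ∀ X Y Z : L, 2 * B (D X Y) Z = B ⁅X, Y⁆ Z + B ⁅Z, X⁆ Y + B X ⁅Z, Y⁆)
    (X Y : L) : D X Y = B X Y • A - B A Y • X := by
  rw [← sub_eq_zero]
  refine hB.1 _ fun Z => ?_
  have h := hKoszul X Y Z
  simp only [hlie, map_sub, map_smul, LinearMap.sub_apply, LinearMap.smul_apply,
    smul_eq_mul] at h ⊢
  rw [hBsymm Z Y] at h
  linear_combination h / 2

theorem lie_basis_eq_smul_sub_smul {ι R L : Type*} [CommRing R] [LieRing L] [LieAlgebra R L]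
    (x : Module.Basis ι R L) {z ℓ : ι} (hzℓ : z ≠ ℓ) {lam : R}
    (hx1 : ∀ i, i ≠ z → i ≠ ℓ → ⁅x z, x i⁆ = x i)
    (hx2 : ⁅x z, x ℓ⁆ = -lam • x z + x ℓ)
    (hx3 : ∀ i, i ≠ z → i ≠ ℓ → ⁅x i, x ℓ⁆ = -lam • x i)
    (hx4 : ∀ i j, i ≠ z → i ≠ ℓ → j ≠ z → j ≠ ℓ → ⁅x i, x j⁆ = 0)
    (f : Module.Dual R L) (hfz : f (x z) = 1) (hfℓ : f (x ℓ) = lam)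
    (hf : ∀ i, i ≠ z → i ≠ ℓ → f (x i) = 0) (p q : ι) :
    ⁅x p, x q⁆ = f (x p) • x q - f (x q) • x p := by
  have cases : ∀ i, i = z ∨ i = ℓ ∨ (i ≠ z ∧ i ≠ ℓ) := by tauto
  rcases cases p with rfl | rfl | ⟨hpz, hpℓ⟩ <;> rcases cases q with rfl | rfl | ⟨hqz, hqℓ⟩
  · simp only [lie_self, sub_self]
  · rw [hx2, hfz, hfℓ]; module
  · rw [hx1 q hqz hqℓ, hfz, hf q hqz hqℓ]; module
  · rw [← lie_skew, hx2, hfz, hfℓ]; module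
  · simp only [lie_self, sub_self]
  · rw [← lie_skew, hx3 q hqz hqℓ, hfℓ, hf q hqz hqℓ]; module
  · rw [← lie_skew, hx1 p hpz hpℓ, hf p hpz hpℓ, hfz]; module
  · rw [hx3 p hpz hpℓ, hf p hpz hpℓ, hfℓ]; module
  · rw [hx4 p q hpz hpℓ hqz hqℓ, hf p hpz hpℓ, hf q hqz hqℓ]; module

theorem stmt_12 (n : ℕ) (hn : 2 ≤ n) (lam : ℝ)
    {L : Type*} [LieRing L] [LieAlgebra ℝ L]
    (B : LinearMap.BilinForm ℝ L) (hBsymm : ∀ X Y : L, B X Y = B Y X)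
    (x : Module.Basis (Fin n) ℝ L) (ε : Fin n → ℝ) (hε : ∀ i, ε i = 1 ∨ ε i = -1)
    (hortho : ∀ i j : Fin n, B (x i) (x j) = if i = j then ε i else 0)
    (z ℓ : Fin n) (hz : (z : ℕ) = 0) (hℓ : (ℓ : ℕ) = n - 1)
    (hx1 : ∀ i : Fin n, i ≠ z → i ≠ ℓ → ⁅x z, x i⁆ = x i)
    (hx2 : ⁅x z, x ℓ⁆ = -lam • x z + x ℓ)
    (hx3 : ∀ i : Fin n, i ≠ z → i ≠ ℓ → ⁅x i, x ℓ⁆ = -lam • x i)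
    (hx4 : ∀ i j : Fin n, i ≠ z → i ≠ ℓ → j ≠ z → j ≠ ℓ → ⁅x i, x j⁆ = 0)
    (D : L → L → L)
    (hKoszul : ∀ X Y Z : L,
      2 * B (D X Y) Z = B ⁅X, Y⁆ Z + B ⁅Z, X⁆ Y + B X ⁅Z, Y⁆) :
    D (x z) (x z) = (lam * ε z * ε ℓ) • x ℓ ∧
    (∀ i : Fin n, i ≠ z → i ≠ ℓ → D (x z) (x i) = 0) ∧
    D (x z) (x ℓ) = -lam • x z ∧
    (∀ i : Fin n, i ≠ z → i ≠ ℓ → D (x i) (x z) = -(x i)) ∧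
    (∀ i j : Fin n, i ≠ z → i ≠ ℓ → j ≠ z → j ≠ ℓ →
      D (x i) (x j) = (if i = j then (1 : ℝ) else 0) •
        (ε i • (ε z • x z + (lam * ε ℓ) • x ℓ))) ∧
    (∀ i : Fin n, i ≠ z → i ≠ ℓ → D (x i) (x ℓ) = -lam • x i) ∧
    D (x ℓ) (x z) = -(x ℓ) ∧
    (∀ i : Fin n, i ≠ z → i ≠ ℓ → D (x ℓ) (x i) = 0) ∧
    D (x ℓ) (x ℓ) = (ε z * ε ℓ) • x z := by
  have hzℓ : z ≠ ℓ := fun h => by rw [h] at hz; omega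
  have hε2 : ∀ i, ε i * ε i = 1 := fun i => by rcases hε i with h | h <;> simp [h]
  set A := ε z • x z + (lam * ε ℓ) • x ℓ
  have hAz : B A (x z) = 1 := by simp [A, hortho, hzℓ.symm, hε2]
  have hAℓ : B A (x ℓ) = lam := by simp [A, hortho, hzℓ, mul_assoc, hε2]
  have hA : ∀ i, i ≠ z → i ≠ ℓ → B A (x i) = 0 := fun i hiz hiℓ => by
    simp [A, hortho, hiz.symm, hiℓ.symm]
  have hB := nondegenerate_of_basis_diagonal x ε
    (fun i => left_ne_zero_of_mul_eq_one (hε2 i)) hortho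
  have hlie := lie_eq_smul_sub_smul_of_basis x (B A)
    (lie_basis_eq_smul_sub_smul x hzℓ hx1 hx2 hx3 hx4 (B A) hAz hAℓ hA)
  have hD : ∀ p q, D (x p) (x q) = B (x p) (x q) • A - B A (x q) • x p := fun p q =>
    eq_of_koszul_of_lie_eq_smul_sub_smul hBsymm hB A hlie hKoszul (x p) (x q)
  refine ⟨?_, fun i hiz hiℓ => ?_, ?_, fun i hiz hiℓ => ?_, fun i j hiz hiℓ hjz hjℓ => ?_,
    fun i hiz hiℓ => ?_, ?_, fun i hiz hiℓ => ?_, ?_⟩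
  · rw [hD, hortho, if_pos rfl, hAz]
    linear_combination (norm := module) (hε2 z) • x z
  · rw [hD, hortho, if_neg hiz.symm, hA i hiz hiℓ]; module
  · rw [hD, hortho, if_neg hzℓ, hAℓ]; module
  · rw [hD, hortho, if_neg hiz, hAz]; module
  · rw [hD, hortho, hA j hjz hjℓ]; split_ifs <;> module
  · rw [hD, hortho, if_neg hiℓ, hAℓ]; module
  · rw [hD, hortho, if_neg hzℓ.symm, hAz]; module
  · rw [hD, hortho, if_neg hiℓ.symm, hA i hiz hiℓ]; module
  · rw [hD, hortho, if_pos rfl, hAℓ]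
    linear_combination (norm := module) (lam * hε2 ℓ) • x ℓ
end
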